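/- arXiv:1705.00189 — 7 statements merged into one kernel-verified Lean document; each statement's English description precedes it below -/
import Mathlib

section
/- For a positive integer n, σ**(n) is odd if and only if n is a power of 2 (including n = 1). -/
def IsUnitaryDivisor (d n : ℕ) : Prop := d ∣ n ∧ Nat.gcd d (n / d) = 1

def IsBiunitaryDivisor (d n : ℕ) : Prop :=
  d ∣ n ∧ ∀ c, IsUnitaryDivisor c d → IsUnitaryDivisor c (n / d) → c = 1

open scoped Classical in
noncomputable def sbu (n : ℕ) : ℕ :=
  ∑ d ∈ n.divisors.filter (fun d => IsBiunitaryDivisor d n), d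

lemma unitary_iff {c d : ℕ} (hd : d ≠ 0) (hc : c ∣ d) :
    IsUnitaryDivisor c d ↔
      ∀ p, p.Prime → c.factorization p = 0 ∨ c.factorization p = d.factorization p := by
  have hc0 : c ≠ 0 := fun h => hd (by simpa [h] using hc)
  have hdc0 : d / c ≠ 0 := Nat.div_ne_zero_iff_of_dvd hc |>.mpr ⟨hd, hc0⟩
  have hle : c.factorization ≤ d.factorization := (Nat.factorization_le_iff_dvd hc0 hd).mpr hc
  constructor
  · rintro ⟨-, hg⟩ p hp
    by_contra hcon
    push_neg at hcon
    obtain ⟨h1, h2⟩ := hcon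
    have hpc : p ∣ c := hp.dvd_iff_one_le_factorization hc0 |>.mpr (by omega)
    have hfd : (d / c).factorization p = d.factorization p - c.factorization p := by
      rw [Nat.factorization_div hc]; simp
    have hpd : p ∣ d / c := by
      have := hle p
      exact hp.dvd_iff_one_le_factorization hdc0 |>.mpr (by omega)
    have : p ∣ 1 := hg ▸ Nat.dvd_gcd hpc hpd
    have h3 := Nat.dvd_one.mp this
    have := hp.one_lt
    omega
  · intro h
    refine ⟨hc, ?_⟩
    by_contra hg
    obtain ⟨q, hq, hqd⟩ := Nat.exists_prime_and_dvd hg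
    have hqc : q ∣ c := hqd.trans (Nat.gcd_dvd_left _ _)
    have hqdc : q ∣ d / c := hqd.trans (Nat.gcd_dvd_right _ _)
    have h1 : c.factorization q ≠ 0 := by
      have := hq.dvd_iff_one_le_factorization hc0 |>.mp hqc; omega
    have h2 : (d / c).factorization q ≠ 0 := by
      have := hq.dvd_iff_one_le_factorization hdc0 |>.mp hqdc; omega
    rw [Nat.factorization_div hc] at h2
    simp only [Finsupp.tsub_apply] at h2
    rcases h q hq with h' | h' <;> omega

lemma biunitary_iff {d n : ℕ} (hn : n ≠ 0) (hd : d ∣ n) :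
    IsBiunitaryDivisor d n ↔
      ∀ p, p.Prime → d.factorization p = 0 ∨ 2 * d.factorization p ≠ n.factorization p := by
  have hd0 : d ≠ 0 := fun h => hn (by simpa [h] using hd)
  have hnd0 : n / d ≠ 0 := Nat.div_ne_zero_iff_of_dvd hd |>.mpr ⟨hn, hd0⟩
  have hle : d.factorization ≤ n.factorization := (Nat.factorization_le_iff_dvd hd0 hn).mpr hd
  have hfnd : ∀ q, (n / d).factorization q = n.factorization q - d.factorization q := by
    intro q; rw [Nat.factorization_div hd]; simp
  constructor
  · rintro ⟨-, hb⟩ p hp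
    by_contra hcon
    push_neg at hcon
    obtain ⟨h1, h2⟩ := hcon
    set i := d.factorization p with hi
    have hfpow : ∀ q, (p ^ i).factorization q = if q = p then i else 0 := by
      intro q
      rw [hp.factorization_pow]
      simp [Finsupp.single_apply, eq_comm]
    have hcd : p ^ i ∣ d := Nat.ordProj_dvd d p
    have hcnd : p ^ i ∣ n / d := by
      rw [← Nat.factorization_le_iff_dvd (pow_ne_zero _ hp.pos.ne') hnd0]
      intro q
      rw [hfpow q, hfnd q]
      split
      · next h => subst h; omega
      · omega
    have h1' := (unitary_iff hd0 hcd).mpr (by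
      intro q hq; rw [hfpow q]; split
      · next h => subst h; right; rfl
      · left; rfl)
    have h2' := (unitary_iff hnd0 hcnd).mpr (by
      intro q hq; rw [hfpow q, hfnd q]; split
      · next h => subst h; right; omega
      · left; rfl)
    have hone := hb _ h1' h2'
    have hi0 : i = 0 := by
      by_contra hi0
      have := Nat.one_lt_pow hi0 hp.one_lt
      omega
    exact h1 hi0
  · intro h
    refine ⟨hd, ?_⟩
    intro c hc1 hc2
    have hcd : c ∣ d := hc1.1
    have hc0 : c ≠ 0 := fun h' => hd0 (by simpa [h'] using hcd)
    by_contra hc1'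
    obtain ⟨q, hq, hqc⟩ := Nat.exists_prime_and_dvd hc1'
    have h1 : c.factorization q ≠ 0 := by
      have := hq.dvd_iff_one_le_factorization hc0 |>.mp hqc; omega
    have e1 := (unitary_iff hd0 hcd).mp hc1 q hq
    have e2 := (unitary_iff hnd0 hc2.1).mp hc2 q hq
    rw [hfnd q] at e2
    have := hle q
    rcases h q hq with h' | h' <;> omega

lemma odd_iff_cast (m : ℕ) : Odd m ↔ (m : ZMod 2) = 1 := by
  rw [Nat.odd_iff]
  constructor
  · intro h
    rw [← ZMod.natCast_mod, h, Nat.cast_one]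
  · intro h
    rcases Nat.mod_two_eq_zero_or_one m with h2 | h2
    · exfalso
      have h0 : (m : ZMod 2) = 0 :=
        (ZMod.natCast_eq_zero_iff m 2).mpr (Nat.dvd_of_mod_eq_zero h2)
      rw [h0] at h
      exact absurd h (by decide)
    · exact h2

lemma fact_mul_pow {d p : ℕ} (hd : d ≠ 0) (hp : p.Prime) (j q : ℕ) :
    ((ordCompl[p] d) * p ^ j).factorization q = if q = p then j else d.factorization q := by
  rw [Nat.factorization_mul (Nat.ordCompl_pos p hd).ne' (pow_ne_zero _ hp.pos.ne'),
    Nat.factorization_ordCompl, hp.factorization_pow]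
  by_cases h : q = p <;> simp [h, Finsupp.single_apply, Finsupp.erase_apply, Ne.symm]

lemma g_spec {n p : ℕ} (hn : n ≠ 0) (hp : p.Prime) (hpn : p ∣ n) {d : ℕ}
    (hd : d ∣ n) (hbd : IsBiunitaryDivisor d n) :
    (ordCompl[p] d * p ^ (n.factorization p - d.factorization p)) ∣ n ∧
    IsBiunitaryDivisor (ordCompl[p] d * p ^ (n.factorization p - d.factorization p)) n ∧
    (ordCompl[p] d * p ^ (n.factorization p - d.factorization p)) ≠ d ∧
    (ordCompl[p]
      (ordCompl[p] d * p ^ (n.factorization p - d.factorization p)) *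
      p ^ (n.factorization p -
        (ordCompl[p] d * p ^ (n.factorization p - d.factorization p)).factorization p)) = d := by
  have hd0 : d ≠ 0 := fun h => hn (by simpa [h] using hd)
  set e := n.factorization p with he
  set i := d.factorization p with hi
  have he0 : e ≠ 0 := by
    have := hp.dvd_iff_one_le_factorization hn |>.mp hpn; omega
  have hie : i ≤ e := (Nat.factorization_le_iff_dvd hd0 hn).mpr hd p
  have hcond : i = 0 ∨ 2 * i ≠ e := (biunitary_iff hn hd).mp hbd p hp
  set gd := ordCompl[p] d * p ^ (e - i) with hgd
  have hgd0 : gd ≠ 0 := Nat.mul_ne_zero (Nat.ordCompl_pos p hd0).ne' (pow_ne_zero _ hp.pos.ne')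
  have hfg : ∀ q, gd.factorization q = if q = p then e - i else d.factorization q :=
    fun q => fact_mul_pow hd0 hp (e - i) q
  have hgdn : gd ∣ n := by
    rw [← Nat.factorization_le_iff_dvd hgd0 hn]
    intro q
    rw [hfg q]
    split
    · next h => subst h; omega
    · exact (Nat.factorization_le_iff_dvd hd0 hn).mpr hd q
  clear_value gd i e
  refine ⟨hgdn, ?_, ?_, ?_⟩
  · rw [biunitary_iff hn hgdn]
    intro q hq
    rw [hfg q]
    split
    · next h => subst h; rw [← he]; omega
    · exact (biunitary_iff hn hd).mp hbd q hq
  · intro hcon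
    have := congrArg (fun m => m.factorization p) hcon
    simp only [hfg p, ← hi, eq_self_iff_true, if_true] at this
    omega
  · have hfgp : gd.factorization p = e - i := by rw [hfg p, if_pos rfl]
    have hoc : gd / p ^ (e - i) = d / p ^ d.factorization p := by
      rw [hgd, ← hi]
      exact Nat.mul_div_cancel _ (pow_pos hp.pos _)
    rw [hfgp, hoc, Nat.sub_sub_self hie, hi, mul_comm]
    exact Nat.ordProj_mul_ordCompl_eq_self d p

theorem stmt4 (n : ℕ) (hn : 0 < n) :
    Odd (sbu n) ↔ ∃ k : ℕ, n = 2 ^ k := by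
  classical
  have hn0 : n ≠ 0 := hn.ne'
  rw [odd_iff_cast]
  have hcast : ((sbu n : ℕ) : ZMod 2)
      = ∑ d ∈ n.divisors.filter (fun d => IsBiunitaryDivisor d n), ((d : ℕ) : ZMod 2) := by
    rw [sbu]
    exact Nat.cast_sum _ _
  rw [hcast]
  have hmem : ∀ d, d ∈ n.divisors.filter (fun d => IsBiunitaryDivisor d n) →
      d ∣ n ∧ IsBiunitaryDivisor d n := by
    intro d hd
    rw [Finset.mem_filter, Nat.mem_divisors] at hd
    exact ⟨hd.1.1, hd.2⟩
  constructor
  · intro h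
    by_contra hk
    push_neg at hk
    obtain ⟨p, hp, hpn, hp2⟩ : ∃ p, p.Prime ∧ p ∣ n ∧ p ≠ 2 := by
      by_contra hcon
      push_neg at hcon
      exact hk _ (Nat.eq_prime_pow_of_unique_prime_dvd hn0
        (fun {q} hq hqd => hcon q hq hqd))
    have hpodd : ((p : ℕ) : ZMod 2) = 1 := by
      rw [← ZMod.natCast_mod, Nat.odd_iff.mp (hp.odd_of_ne_two hp2), Nat.cast_one]
    have hcastd : ∀ d : ℕ, d ≠ 0 → ∀ j : ℕ,
        (((ordCompl[p] d * p ^ j : ℕ)) : ZMod 2) = ((ordCompl[p] d : ℕ) : ZMod 2) := by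
      intro d hd0 j
      push_cast
      rw [hpodd, one_pow, mul_one]
    have hzero : ∑ d ∈ n.divisors.filter (fun d => IsBiunitaryDivisor d n),
        ((d : ℕ) : ZMod 2) = 0 := by
      refine Finset.sum_involution
        (fun d _ => ordCompl[p] d * p ^ (n.factorization p - d.factorization p))
        ?_ ?_ ?_ ?_
      · intro d hd
        obtain ⟨hdn, hbd⟩ := hmem d hd
        have hd0 : d ≠ 0 := fun h => hn0 (by simpa [h] using hdn)
        rw [hcastd d hd0]
        have : ((d : ℕ) : ZMod 2) = ((ordCompl[p] d : ℕ) : ZMod 2) := by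
          conv_lhs => rw [← Nat.ordProj_mul_ordCompl_eq_self d p]
          push_cast
          rw [hpodd, one_pow, one_mul]
        rw [this]
        exact CharTwo.add_self_eq_zero _
      · intro d hd _
        obtain ⟨hdn, hbd⟩ := hmem d hd
        exact (g_spec hn0 hp hpn hdn hbd).2.2.1
      · intro d hd
        obtain ⟨hdn, hbd⟩ := hmem d hd
        obtain ⟨h1, h2, -, -⟩ := g_spec hn0 hp hpn hdn hbd
        rw [Finset.mem_filter, Nat.mem_divisors]
        exact ⟨⟨h1, hn0⟩, h2⟩
      · intro d hd
        obtain ⟨hdn, hbd⟩ := hmem d hd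
        exact (g_spec hn0 hp hpn hdn hbd).2.2.2
    rw [hzero] at h
    exact absurd h (by decide)
  · rintro ⟨k, rfl⟩
    have h2k : (2 : ℕ) ^ k ≠ 0 := pow_ne_zero _ two_ne_zero
    have hstep : ∀ d ∈ (2 ^ k : ℕ).divisors.filter
        (fun d => IsBiunitaryDivisor d (2 ^ k)),
        ((d : ℕ) : ZMod 2) = if d = 1 then 1 else 0 := by
      intro d hd
      obtain ⟨hdn, -⟩ := hmem d hd
      by_cases h1 : d = 1
      · simp [h1]
      · rw [if_neg h1]
        have hd0 : d ≠ 0 := fun h => h2k (by simpa [h] using hdn)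
        obtain ⟨q, hq, hqd⟩ := Nat.exists_prime_and_dvd h1
        have hq2 : q = 2 :=
          (Nat.prime_dvd_prime_iff_eq hq Nat.prime_two).mp (hq.dvd_of_dvd_pow (hqd.trans hdn))
        exact (ZMod.natCast_eq_zero_iff d 2).mpr (hq2 ▸ hqd)
    rw [Finset.sum_congr rfl hstep, Finset.sum_ite_eq' _ 1 (fun _ => (1 : ZMod 2))]
    rw [if_pos]
    rw [Finset.mem_filter, Nat.mem_divisors]
    refine ⟨⟨one_dvd _, h2k⟩, one_dvd _, fun c hc _ => Nat.dvd_one.mp hc.1⟩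
end

section
/- If n is an even positive integer, then 2^(ω(n)-1) divides σ**(n). -/
lemma mul_div_left' (a b c : ℕ) (h : c ∣ a) : a * b / c = a / c * b := by
  rw [mul_comm, Nat.mul_div_assoc b h, mul_comm]

lemma unitary_mul_left {c a b : ℕ} (h : IsUnitaryDivisor c a) (hb : Nat.Coprime c b) :
    IsUnitaryDivisor c (a * b) := by
  refine ⟨h.1.mul_right b, ?_⟩
  rw [mul_div_left' a b c h.1]
  exact Nat.Coprime.mul_right h.2 hb

lemma unitary_mul_right {c a b : ℕ} (h : IsUnitaryDivisor c b) (ha : Nat.Coprime c a) :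
    IsUnitaryDivisor c (a * b) := by
  rw [mul_comm]; exact unitary_mul_left h ha

lemma biunitary_mul {m n d1 d2 : ℕ} (hmn : Nat.Coprime m n) (h1 : d1 ∣ m) (h2 : d2 ∣ n) :
    IsBiunitaryDivisor (d1 * d2) (m * n) ↔
      IsBiunitaryDivisor d1 m ∧ IsBiunitaryDivisor d2 n := by
  have hq : m * n / (d1 * d2) = m / d1 * (n / d2) := (Nat.div_mul_div_comm h1 h2).symm
  constructor
  · rintro ⟨-, hc⟩
    refine ⟨⟨h1, fun c hc1 hc2 => ?_⟩, ⟨h2, fun c hc1 hc2 => ?_⟩⟩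
    · have hcm : Nat.Coprime c n := hmn.coprime_dvd_left (hc1.1.trans h1)
      refine hc c (unitary_mul_left hc1 (hcm.coprime_dvd_right h2)) ?_
      rw [hq]
      exact unitary_mul_left hc2 (hcm.coprime_dvd_right (Nat.div_dvd_of_dvd h2))
    · have hcn : Nat.Coprime m c := hmn.coprime_dvd_right (hc1.1.trans h2)
      refine hc c (unitary_mul_right hc1 (hcn.symm.coprime_dvd_right h1)) ?_
      rw [hq]
      exact unitary_mul_right hc2 (hcn.symm.coprime_dvd_right (Nat.div_dvd_of_dvd h1))
  · rintro ⟨⟨-, hcm⟩, ⟨-, hcn⟩⟩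
    refine ⟨mul_dvd_mul h1 h2, fun c hcd hcq => ?_⟩
    have hdvd : c ∣ m * n := hcd.1.trans (mul_dvd_mul h1 h2)
    set c1 := Nat.gcd c m with hc1
    set c2 := Nat.gcd c n with hc2
    have hcc : c1 * c2 = c := (Nat.gcd_mul_gcd_eq_iff_dvd_mul_of_coprime hmn).mpr hdvd
    have hc1c : c1 ∣ c := Nat.gcd_dvd_left c m
    have hc2c : c2 ∣ c := Nat.gcd_dvd_left c n
    have hc1m : c1 ∣ m := Nat.gcd_dvd_right c m
    have hc2n : c2 ∣ n := Nat.gcd_dvd_right c n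
    have hcop1 : Nat.Coprime c1 n := hmn.coprime_dvd_left hc1m
    have hcop2 : Nat.Coprime m c2 := hmn.coprime_dvd_right hc2n
    have hc1d : c1 ∣ d1 :=
      (hcop1.coprime_dvd_right h2).dvd_of_dvd_mul_right (hc1c.trans hcd.1)
    have hc2d : c2 ∣ d2 :=
      (hcop2.symm.coprime_dvd_right h1).dvd_of_dvd_mul_left (hc2c.trans hcd.1)
    have hc1q : c1 ∣ m / d1 := by
      have : c1 ∣ m / d1 * (n / d2) := hc1c.trans (hq ▸ hcq.1)
      exact (hcop1.coprime_dvd_right (Nat.div_dvd_of_dvd h2)).dvd_of_dvd_mul_right this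
    have hc2q : c2 ∣ n / d2 := by
      have : c2 ∣ m / d1 * (n / d2) := hc2c.trans (hq ▸ hcq.1)
      exact ((hcop2.symm.coprime_dvd_right (Nat.div_dvd_of_dvd h1))).dvd_of_dvd_mul_left this
    -- c1 is a unitary divisor of d1 and of m / d1
    have key1 : d1 / c1 * (d2 / c2) = d1 * d2 / c := by
      rw [← hcc]; exact Nat.div_mul_div_comm hc1d hc2d
    have key2 : m / d1 / c1 * (n / d2 / c2) = m * n / (d1 * d2) / c := by
      rw [← hcc, hq]; exact Nat.div_mul_div_comm hc1q hc2q
    have u1 : IsUnitaryDivisor c1 d1 := by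
      refine ⟨hc1d, Nat.eq_one_of_dvd_one ?_⟩
      rw [← hcd.2]
      exact Nat.dvd_gcd ((Nat.gcd_dvd_left _ _).trans hc1c)
        ((Nat.gcd_dvd_right _ _).trans (key1 ▸ dvd_mul_right _ _))
    have u1' : IsUnitaryDivisor c1 (m / d1) := by
      refine ⟨hc1q, Nat.eq_one_of_dvd_one ?_⟩
      rw [← hcq.2]
      exact Nat.dvd_gcd ((Nat.gcd_dvd_left _ _).trans hc1c)
        ((Nat.gcd_dvd_right _ _).trans (key2 ▸ dvd_mul_right _ _))
    have u2 : IsUnitaryDivisor c2 d2 := by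
      refine ⟨hc2d, Nat.eq_one_of_dvd_one ?_⟩
      rw [← hcd.2]
      exact Nat.dvd_gcd ((Nat.gcd_dvd_left _ _).trans hc2c)
        ((Nat.gcd_dvd_right _ _).trans (key1 ▸ dvd_mul_left _ _))
    have u2' : IsUnitaryDivisor c2 (n / d2) := by
      refine ⟨hc2q, Nat.eq_one_of_dvd_one ?_⟩
      rw [← hcq.2]
      exact Nat.dvd_gcd ((Nat.gcd_dvd_left _ _).trans hc2c)
        ((Nat.gcd_dvd_right _ _).trans (key2 ▸ dvd_mul_left _ _))
    have e1 : c1 = 1 := hcm c1 u1 u1'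
    have e2 : c2 = 1 := hcn c2 u2 u2'
    rw [← hcc, e1, e2]

lemma gcd_mul_eq_left {m n d1 d2 : ℕ} (hmn : Nat.Coprime m n) (h1 : d1 ∣ m) (h2 : d2 ∣ n) :
    Nat.gcd (d1 * d2) m = d1 := by
  refine Nat.dvd_antisymm ?_ (Nat.dvd_gcd (dvd_mul_right d1 d2) h1)
  have hcop : Nat.Coprime (Nat.gcd (d1 * d2) m) d2 :=
    (hmn.coprime_dvd_right h2).coprime_dvd_left (Nat.gcd_dvd_right _ _)
  exact hcop.dvd_of_dvd_mul_right (Nat.gcd_dvd_left _ _)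

lemma gcd_mul_eq_right {m n d1 d2 : ℕ} (hmn : Nat.Coprime m n) (h1 : d1 ∣ m) (h2 : d2 ∣ n) :
    Nat.gcd (d1 * d2) n = d2 := by
  rw [mul_comm]; exact gcd_mul_eq_left hmn.symm h2 h1

open Finset in
lemma sbu_mul {m n : ℕ} (hm : 0 < m) (hn : 0 < n) (hmn : Nat.Coprime m n) :
    sbu (m * n) = sbu m * sbu n := by
  classical
  unfold sbu
  rw [Finset.sum_mul_sum, ← Finset.sum_product']
  refine Finset.sum_bij' (fun p _ => p.1 * p.2) (fun d _ => (Nat.gcd d m, Nat.gcd d n))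
    ?_ ?_ ?_ ?_ ?_ |>.symm
  · rintro ⟨d1, d2⟩ hp
    simp only [Finset.mem_product, Finset.mem_filter, Nat.mem_divisors] at hp ⊢
    obtain ⟨⟨⟨hd1, -⟩, hb1⟩, ⟨hd2, -⟩, hb2⟩ := hp
    exact ⟨⟨mul_dvd_mul hd1 hd2, (mul_pos hm hn).ne'⟩,
      (biunitary_mul hmn hd1 hd2).mpr ⟨hb1, hb2⟩⟩
  · intro d hd
    simp only [Finset.mem_filter, Nat.mem_divisors] at hd
    obtain ⟨⟨hdvd, -⟩, hb⟩ := hd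
    have hcc : Nat.gcd d m * Nat.gcd d n = d :=
      (Nat.gcd_mul_gcd_eq_iff_dvd_mul_of_coprime hmn).mpr hdvd
    have hb' := hb
    rw [← hcc] at hb'
    obtain ⟨hbm, hbn⟩ := (biunitary_mul hmn (Nat.gcd_dvd_right d m) (Nat.gcd_dvd_right d n)).mp hb'
    simp only [Finset.mem_product, Finset.mem_filter, Nat.mem_divisors]
    exact ⟨⟨⟨Nat.gcd_dvd_right d m, hm.ne'⟩, hbm⟩, ⟨Nat.gcd_dvd_right d n, hn.ne'⟩, hbn⟩
  · rintro ⟨d1, d2⟩ hp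
    simp only [Finset.mem_product, Finset.mem_filter, Nat.mem_divisors] at hp
    obtain ⟨⟨⟨hd1, -⟩, -⟩, ⟨hd2, -⟩, -⟩ := hp
    simp only [gcd_mul_eq_left hmn hd1 hd2, gcd_mul_eq_right hmn hd1 hd2]
  · intro d hd
    simp only [Finset.mem_filter, Nat.mem_divisors] at hd
    exact (Nat.gcd_mul_gcd_eq_iff_dvd_mul_of_coprime hmn).mpr hd.1.1
  · intro p _
    rfl

lemma unitary_pow {p : ℕ} (hp : p.Prime) {j k : ℕ} (h : IsUnitaryDivisor (p ^ j) (p ^ k)) :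
    j = 0 ∨ j = k := by
  have hjk : j ≤ k := (Nat.pow_dvd_pow_iff_le_right hp.one_lt).mp h.1
  by_contra hcon
  push_neg at hcon
  have hg := h.2
  rw [Nat.pow_div hjk hp.pos] at hg
  have hpd : p ∣ Nat.gcd (p ^ j) (p ^ (k - j)) :=
    Nat.dvd_gcd (dvd_pow_self p hcon.1) (dvd_pow_self p (by omega))
  rw [hg] at hpd
  exact hp.one_lt.ne' (Nat.dvd_one.mp hpd)

lemma biunitary_prime_pow {p : ℕ} (hp : p.Prime) {a i : ℕ} (hia : i ≤ a) (ha : a ≠ 0) :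
    IsBiunitaryDivisor (p ^ i) (p ^ a) ↔ 2 * i ≠ a := by
  have hq : p ^ a / p ^ i = p ^ (a - i) := Nat.pow_div hia hp.pos
  constructor
  · rintro ⟨-, hc⟩ h2i
    have hi0 : i ≠ 0 := by omega
    have hai : a - i = i := by omega
    have hu : IsUnitaryDivisor (p ^ i) (p ^ i) :=
      ⟨dvd_rfl, by rw [Nat.div_self (pow_pos hp.pos i)]; exact Nat.gcd_one_right _⟩
    have hone := hc (p ^ i) hu (by rw [hq, hai]; exact hu)
    have : 1 < p ^ i := Nat.one_lt_pow hi0 hp.one_lt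
    omega
  · intro hne
    refine ⟨pow_dvd_pow p hia, fun c hc1 hc2 => ?_⟩
    rw [hq] at hc2
    obtain ⟨j, hji, rfl⟩ := (Nat.dvd_prime_pow hp).mp hc1.1
    rcases unitary_pow hp hc1 with h0 | hji'
    · rw [h0, pow_zero]
    rcases unitary_pow hp hc2 with h0 | hja
    · rw [h0, pow_zero]
    omega

lemma two_dvd_sbu_prime_pow {p : ℕ} (hp : p.Prime) (hp2 : p ≠ 2) {a : ℕ} (ha : a ≠ 0) :
    2 ∣ sbu (p ^ a) := by
  classical
  have hpa0 : p ^ a ≠ 0 := (pow_pos hp.pos a).ne'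
  have key : (p ^ a).divisors.filter (fun d => IsBiunitaryDivisor d (p ^ a))
      = ((Finset.range (a + 1)).filter (fun i => 2 * i ≠ a)).image (p ^ ·) := by
    ext d
    simp only [Finset.mem_filter, Nat.mem_divisors, Finset.mem_image, Finset.mem_range]
    constructor
    · rintro ⟨⟨hd, -⟩, hb⟩
      obtain ⟨i, hia, rfl⟩ := (Nat.dvd_prime_pow hp).mp hd
      exact ⟨i, ⟨by omega, (biunitary_prime_pow hp hia ha).mp hb⟩, rfl⟩
    · rintro ⟨i, ⟨hia, hne⟩, rfl⟩
      have hia' : i ≤ a := by omega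
      exact ⟨⟨pow_dvd_pow p hia', hpa0⟩, (biunitary_prime_pow hp hia' ha).mpr hne⟩
  rw [sbu, key, Finset.sum_image (fun i _ j _ h => Nat.pow_right_injective hp.two_le h)]
  have hodd : Odd p := hp.odd_of_ne_two hp2
  -- each p ^ i is odd, so the parity of the sum is the parity of the card
  set S := (Finset.range (a + 1)).filter (fun i => 2 * i ≠ a) with hS
  have hmod : (∑ i ∈ S, p ^ i) % 2 = S.card % 2 := by
    rw [Finset.sum_nat_mod]
    have : ∀ i ∈ S, p ^ i % 2 = 1 := fun i _ => Nat.odd_iff.mp (hodd.pow)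
    rw [Finset.sum_congr rfl this, Finset.sum_const, smul_eq_mul, mul_one]
  -- card is even
  have hcard : S.card % 2 = 0 := by
    have hsplit := Finset.card_filter_add_card_filter_not
      (s := Finset.range (a + 1)) (p := fun i => 2 * i ≠ a)
    rw [Finset.card_range, ← hS] at hsplit
    have hcompl : ((Finset.range (a + 1)).filter (fun i => ¬(2 * i ≠ a))).card
        = if a % 2 = 0 then 1 else 0 := by
      rcases Nat.even_or_odd a with he | ho
      · obtain ⟨b, hb⟩ := he
        have : (Finset.range (a + 1)).filter (fun i => ¬(2 * i ≠ a)) = {b} := by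
          ext i
          simp only [Finset.mem_filter, Finset.mem_range, Finset.mem_singleton, not_not]
          omega
        rw [this, Finset.card_singleton, if_pos (by omega)]
      · have ho' : a % 2 = 1 := Nat.odd_iff.mp ho
        have : (Finset.range (a + 1)).filter (fun i => ¬(2 * i ≠ a)) = ∅ := by
          ext i
          simp only [Finset.mem_filter, Finset.mem_range, Finset.notMem_empty,
            iff_false, not_and, not_not]
          omega
        rw [this, Finset.card_empty, if_neg (by omega)]
    rw [hcompl] at hsplit
    rcases Nat.even_or_odd a with he | ho
    · have : a % 2 = 0 := Nat.even_iff.mp he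
      rw [if_pos this] at hsplit
      omega
    · have : a % 2 = 1 := Nat.odd_iff.mp ho
      rw [if_neg (by omega)] at hsplit
      omega
  omega

lemma sbu_aux : ∀ n : ℕ, 0 < n → Even n → 2 ^ (n.primeFactors.card - 1) ∣ sbu n := by
  intro n
  induction n using Nat.strong_induction_on with
  | _ n ih =>
    intro hn heven
    by_cases hodd : ∃ p ∈ n.primeFactors, p ≠ 2
    · obtain ⟨p, hpmem, hp2⟩ := hodd
      obtain ⟨hp, hpd, -⟩ := Nat.mem_primeFactors.mp hpmem
      have hn0 : n ≠ 0 := hn.ne'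
      set a := n.factorization p with ha
      set m := n / p ^ a with hm
      have heq : p ^ a * m = n := Nat.ordProj_mul_ordCompl_eq_self n p
      have ha0 : a ≠ 0 := (hp.factorization_pos_of_dvd hn0 hpd).ne'
      have hm0 : 0 < m := Nat.ordCompl_pos p hn0
      have hcop : Nat.Coprime (p ^ a) m :=
        Nat.Coprime.pow_left a (Nat.coprime_ordCompl hp hn0)
      have hpa1 : 1 < p ^ a := Nat.one_lt_pow ha0 hp.one_lt
      have hmlt : m < n := by
        rw [← heq]
        exact lt_mul_of_one_lt_left hm0 hpa1
      have hmeven : Even m := by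
        have h2 : (2 : ℕ) ∣ n := heven.two_dvd
        rw [← heq] at h2
        have hc2 : Nat.Coprime 2 (p ^ a) :=
          Nat.Coprime.pow_right a ((Nat.coprime_primes Nat.prime_two hp).mpr
            (fun h => hp2 h.symm))
        exact (even_iff_two_dvd).mpr (hc2.dvd_of_dvd_mul_left h2)
      have hpnm : p ∉ m.primeFactors := fun h =>
        Nat.not_dvd_ordCompl hp hn0 (Nat.dvd_of_mem_primeFactors h)
      have hpf : n.primeFactors = insert p m.primeFactors := by
        conv_lhs => rw [← heq]
        rw [Nat.primeFactors_mul (pow_ne_zero a hp.pos.ne') hm0.ne',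
          Nat.primeFactors_prime_pow ha0 hp]
        rw [← Finset.insert_eq]
      have hcard : n.primeFactors.card = m.primeFactors.card + 1 := by
        rw [hpf, Finset.card_insert_of_notMem hpnm]
      have h2m : 1 ≤ m.primeFactors.card :=
        Finset.card_pos.mpr ⟨2, Nat.mem_primeFactors.mpr ⟨Nat.prime_two, hmeven.two_dvd, hm0.ne'⟩⟩
      have ihm := ih m hmlt hm0 hmeven
      have hps := two_dvd_sbu_prime_pow hp hp2 ha0
      rw [hcard, Nat.add_sub_cancel, ← heq, sbu_mul (pow_pos hp.pos a) hm0 hcop]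
      have hsplit : m.primeFactors.card = 1 + (m.primeFactors.card - 1) := by omega
      rw [hsplit, pow_add, pow_one]
      exact mul_dvd_mul hps ihm
    · push_neg at hodd
      have hsub : n.primeFactors ⊆ {2} := fun p hp =>
        Finset.mem_singleton.mpr (hodd p hp)
      have hle : n.primeFactors.card ≤ 1 := by
        simpa using Finset.card_le_card hsub
      rw [Nat.sub_eq_zero_of_le hle, pow_zero]
      exact one_dvd _

theorem stmt6 (n : ℕ) (hn : 0 < n) (heven : Even n) :
    2 ^ (n.primeFactors.card - 1) ∣ sbu n := sbu_aux n hn heven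
end

section
/- For any prime p and positive integers m and e with e ≥ 2m - 1 and e ≠ 2m, we have σ**(p^e) ≥ p^e + p^(e-1) + ⋯ + p^(e-m), i.e., σ**(p^e)/p^e ≥ 1 + 1/p + ⋯ + 1/p^m. -/
lemma unitary_pp {p k c : ℕ} (hp : p.Prime) (h : IsUnitaryDivisor c (p ^ k)) :
    c = 1 ∨ c = p ^ k := by
  obtain ⟨hd, hg⟩ := h
  obtain ⟨j, hj, rfl⟩ := (Nat.dvd_prime_pow hp).mp hd
  rcases Nat.eq_zero_or_pos j with rfl | hj0
  · left; simp
  rcases eq_or_lt_of_le hj with rfl | hlt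
  · right; rfl
  exfalso
  have hdiv : p ^ k / p ^ j = p ^ (k - j) := Nat.pow_div hj hp.pos
  rw [hdiv] at hg
  have h1 : p ∣ p ^ j := dvd_pow_self p hj0.ne'
  have h2 : p ∣ p ^ (k - j) := dvd_pow_self p (Nat.sub_ne_zero_of_lt hlt)
  have := Nat.dvd_gcd h1 h2
  rw [hg] at this
  exact hp.one_lt.ne' (Nat.eq_one_of_dvd_one this)

theorem stmt10 (p e m : ℕ) (hp : p.Prime) (hm : 0 < m) (he : 2 * m - 1 ≤ e)
    (hne : e ≠ 2 * m) :
    sbu (p ^ e) ≥ ∑ i ∈ Finset.range (m + 1), p ^ (e - i) := by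
  classical
  have hme : m ≤ e := le_trans (by omega) he
  have hinj : Set.InjOn (fun i => p ^ (e - i)) (Finset.range (m + 1)) := by
    intro a ha b hb hab
    simp only [Finset.coe_range, Set.mem_Iio] at ha hb
    have := Nat.pow_right_injective hp.two_le hab
    omega
  have hsum : ∑ i ∈ Finset.range (m + 1), p ^ (e - i)
      = ∑ d ∈ (Finset.range (m + 1)).image (fun i => p ^ (e - i)), d := by
    rw [Finset.sum_image (fun a ha b hb => hinj ha hb)]
  rw [ge_iff_le, hsum]
  apply Finset.sum_le_sum_of_subset
  intro d hd
  simp only [Finset.mem_image, Finset.mem_range] at hd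
  obtain ⟨i, hi, rfl⟩ := hd
  have him : i ≤ m := Nat.lt_succ_iff.mp hi
  have hie : i ≤ e := le_trans him hme
  have hei : e ≠ 2 * i := by omega
  have hdvd : p ^ (e - i) ∣ p ^ e := pow_dvd_pow p (Nat.sub_le e i)
  have hq : p ^ e / p ^ (e - i) = p ^ i := by
    rw [Nat.pow_div (Nat.sub_le e i) hp.pos]
    congr 1; omega
  refine Finset.mem_filter.mpr ⟨Nat.mem_divisors.mpr ⟨hdvd, pow_ne_zero e hp.pos.ne'⟩, hdvd, ?_⟩
  intro c hc1 hc2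
  rw [hq] at hc2
  rcases unitary_pp hp hc1 with rfl | rfl
  · rfl
  rcases unitary_pp hp hc2 with h1 | h2
  · exact h1
  · have := Nat.pow_right_injective hp.two_le h2
    omega
end

section
/- Let p and q be odd primes and e a positive integer. If σ**(p^e) = 2^a · q^b for some nonnegative integers a, b, then e ≤ 4. -/
open Finset

private def G (p n : ℕ) : ℕ := ∑ i ∈ Finset.range n, p ^ i

private lemma G_succ (p n : ℕ) : G p (n+1) = p * G p n + 1 := by
  rw [G, Finset.sum_range_succ', pow_zero]
  simp [G, Finset.mul_sum, pow_succ']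

private lemma G_add (p m n : ℕ) : G p (m+n) = G p m + p^m * G p n := by
  rw [G, Finset.sum_range_add]
  simp [G, pow_add, Finset.mul_sum]

private lemma G_dvd (p t s : ℕ) : G p t ∣ G p (t * s) := by
  induction s with
  | zero => simp [G]
  | succ s ih =>
      have h : t * (s+1) = t*s + t := by ring
      rw [h, G_add]
      exact dvd_add ih (Dvd.dvd.mul_left dvd_rfl _)

private lemma G_mod_two (p : ℕ) (hp : p % 2 = 1) (n : ℕ) : G p n % 2 = n % 2 := by
  induction n with
  | zero => simp [G]
  | succ n ih =>
      have hpn : p ^ n % 2 = 1 := Nat.odd_iff.mp ((Nat.odd_iff.mpr hp).pow)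
      rw [G, Finset.sum_range_succ, ← G]
      omega

private lemma G_two (p : ℕ) : G p 2 = 1 + p := by simp [G, Finset.sum_range_succ]

private lemma G_gt_one {p n : ℕ} (hp : 2 ≤ p) (hn : 2 ≤ n) : 1 < G p n := by
  have h := G_add p 2 (n - 2)
  have h2 : 2 + (n-2) = n := by omega
  rw [h2, G_two] at h
  omega

private lemma pow_gcd_aux {p u v : ℕ} (hp : p.Prime) (h : Nat.gcd (p^u) (p^v) = 1) :
    u = 0 ∨ v = 0 := by
  by_contra hc
  push_neg at hc
  have h1 : p ∣ p ^ u := dvd_pow_self p hc.1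
  have h2 : p ∣ p ^ v := dvd_pow_self p hc.2
  have := Nat.dvd_gcd h1 h2
  rw [h] at this
  exact hp.one_lt.ne' (Nat.eq_one_of_dvd_one this)

private lemma biu_iff {p e i : ℕ} (hp : p.Prime) (he : 0 < e) (hi : i ≤ e) :
    IsBiunitaryDivisor (p^i) (p^e) ↔ 2*i ≠ e := by
  have hdiv : p^e / p^i = p^(e-i) := Nat.pow_div hi hp.pos
  constructor
  · rintro ⟨-, hc⟩ h2
    have hei : e - i = i := by omega
    have h1 : IsUnitaryDivisor (p^i) (p^i) :=
      ⟨dvd_rfl, by rw [Nat.div_self (pow_pos hp.pos i)]; exact Nat.gcd_one_right _⟩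
    have := hc (p^i) h1 (by rw [hdiv, hei]; exact h1)
    have : i = 0 := by
      by_contra hi0
      have : 2 ≤ p ^ i := (Nat.one_lt_pow hi0 hp.one_lt)
      omega
    omega
  · intro hne
    refine ⟨pow_dvd_pow p hi, ?_⟩
    rintro c ⟨hcd, hcu⟩ ⟨hcd2, hcu2⟩
    rw [hdiv] at hcd2 hcu2
    obtain ⟨j, hj, rfl⟩ := (Nat.dvd_prime_pow hp).mp hcd
    have hju : Nat.gcd (p^j) (p^(i-j)) = 1 := by
      rwa [Nat.pow_div hj hp.pos] at hcu
    have hj2 : j ≤ e - i := (Nat.pow_dvd_pow_iff_le_right hp.one_lt).mp hcd2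
    have hju2 : Nat.gcd (p^j) (p^(e-i-j)) = 1 := by
      rwa [Nat.pow_div hj2 hp.pos] at hcu2
    rcases pow_gcd_aux hp hju with h0 | h0
    · simp [h0]
    rcases pow_gcd_aux hp hju2 with h1 | h1
    · simp [h1]
    omega

private lemma sbu_pow {p e : ℕ} (hp : p.Prime) (he : 0 < e) :
    sbu (p^e) = ∑ i ∈ (Finset.range (e+1)).filter (fun i => 2*i ≠ e), p ^ i := by
  classical
  rw [sbu, Nat.divisors_prime_pow hp, Finset.filter_map, Finset.sum_map]
  simp only [Function.Embedding.coeFn_mk, Function.comp]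
  congr 1
  apply Finset.filter_congr
  intro i him
  rw [Finset.mem_range] at him
  have hb := biu_iff (p:=p) (e:=e) (i:=i) hp he (by omega)
  simpa using hb

private lemma sbu_odd {p e : ℕ} (hp : p.Prime) (he : Odd e) :
    sbu (p^e) = G p (e+1) := by
  obtain ⟨w, hw⟩ := he
  rw [sbu_pow hp (by omega), Finset.filter_true_of_mem (fun i _ => by omega), G]

private lemma sbu_even {p e : ℕ} (hp : p.Prime) (he : 0 < e) (h2 : 2 ∣ e) :
    sbu (p^e) + p^(e/2) = G p (e+1) := by
  rw [sbu_pow hp he]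
  have hs := Finset.sum_filter_add_sum_filter_not (Finset.range (e+1))
    (fun i => 2*i ≠ e) (fun i => p ^ i)
  have hc : Finset.filter (fun i => ¬ 2*i ≠ e) (Finset.range (e+1)) = {e/2} := by
    ext i
    simp only [Finset.mem_filter, Finset.mem_range, Finset.mem_singleton, not_ne_iff]
    omega
  rw [hc, Finset.sum_singleton] at hs
  rw [G]
  exact hs

private lemma q_dvd_X {q a b X : ℕ} (hq : q.Prime) (hX : X ∣ 2^a * q^b)
    (hodd : X % 2 = 1) (h1 : 1 < X) : q ∣ X := by
  have hcop : Nat.Coprime X 2 :=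
    Nat.Coprime.symm ((Nat.Prime.coprime_iff_not_dvd Nat.prime_two).mpr (by omega))
  have hq' : X ∣ q^b := (hcop.pow_right a).dvd_of_dvd_mul_left hX
  obtain ⟨r, hr, hrX⟩ := Nat.exists_prime_and_dvd (by omega : X ≠ 1)
  have hrq : r = q := (Nat.prime_dvd_prime_iff_eq hr hq).mp (hr.dvd_of_dvd_pow (hrX.trans hq'))
  exact hrq ▸ hrX

private lemma contra2 {q : ℕ} (hq : q.Prime) (hqo : Odd q) (h : (2 : ZMod q) = 0) : False := by
  have hd : q ∣ 2 := by
    have := (ZMod.natCast_eq_zero_iff 2 q).mp (by exact_mod_cast h)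
    exact this
  have := (Nat.prime_dvd_prime_iff_eq hq Nat.prime_two).mp hd
  rw [this] at hqo
  exact (by decide : ¬ Odd 2) hqo

private lemma pow_eq_one_of_geom {q n : ℕ} {x : ZMod q}
    (h : ∑ i ∈ Finset.range n, x^i = 0) : x^n = 1 := by
  have hg := geom_sum_mul x n
  rw [h, zero_mul] at hg
  exact sub_eq_zero.mp hg.symm

private lemma q_dvd_G_pow {p q n : ℕ} (h : q ∣ G p n) : (p : ZMod q)^n = 1 := by
  apply pow_eq_one_of_geom
  have := (ZMod.natCast_eq_zero_iff _ q).mpr h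
  rw [G] at this
  push_cast at this
  exact this

private lemma exists_Y {p n : ℕ} (hp3 : 3 ≤ p) (hpo : p % 2 = 1) (hn : 3 ≤ n) :
    ∃ Y, Y ∣ p^n + 1 ∧ Y % 2 = 1 ∧ 1 < Y := by
  have hpn3 : 27 ≤ p ^ n := by
    calc (27:ℕ) = 3^3 := by norm_num
    _ ≤ p^3 := Nat.pow_le_pow_left hp3 3
    _ ≤ p^n := Nat.pow_le_pow_right (by omega) hn
  rcases Nat.even_or_odd n with hne | hno
  · obtain ⟨j, hj⟩ := Nat.odd_iff.mpr hpo
    have hsq : p^2 % 4 = 1 := by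
      have h4 : p^2 = 4*(j*j+j) + 1 := by subst hj; ring
      omega
    have hpow : p ^ n % 4 = 1 := by
      obtain ⟨k, hk⟩ := hne
      have hm : p ^ n = (p^2)^(n/2) := by rw [← pow_mul]; congr 1; omega
      rw [hm, Nat.pow_mod, hsq]
      simp
    obtain ⟨w, hw⟩ : ∃ w, p ^ n = 4*w + 1 := ⟨p^n/4, by omega⟩
    exact ⟨2*w+1, ⟨2, by omega⟩, by omega, by omega⟩
  · set E : ℤ := ∑ i ∈ Finset.range n, (-(p:ℤ))^i with hE
    have hgeom := geom_sum_mul (-(p:ℤ)) n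
    rw [← hE, hno.neg_pow] at hgeom
    have hkey : E * ((p:ℤ) + 1) = (p:ℤ)^n + 1 := by linear_combination (-1 : ℤ) * hgeom
    have hppos : (0:ℤ) < (p:ℤ)^n + 1 := by positivity
    have hEpos : 0 < E := by
      by_contra hE0
      push_neg at hE0
      nlinarith [mul_nonneg (neg_nonneg.mpr hE0) (by positivity : (0:ℤ) ≤ (p:ℤ)+1)]
    have hcast : (E.toNat : ℤ) = E := Int.toNat_of_nonneg hEpos.le
    have hnat : E.toNat * (p + 1) = p^n + 1 := by
      have h := hkey
      rw [← hcast] at h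
      exact_mod_cast h
    have hnotdvd : ¬ (2:ℤ) ∣ E := by
      intro hdvd
      have h0 : ((E : ℤ) : ZMod 2) = 0 := (ZMod.intCast_zmod_eq_zero_iff_dvd E 2).mpr hdvd
      rw [hE] at h0
      push_cast at h0
      have hp1 : ((p:ℕ) : ZMod 2) = 1 := by
        rw [← ZMod.natCast_mod, hpo]
        norm_num
      rw [hp1] at h0
      simp only [neg_neg, (by decide : (-1 : ZMod 2) = 1), one_pow, Finset.sum_const,
        Finset.card_range, nsmul_eq_mul, mul_one] at h0
      have : (2:ℕ) ∣ n := by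
        have := (ZMod.natCast_eq_zero_iff n 2).mp h0
        exact this
      rw [Nat.odd_iff] at hno
      omega
    have hYodd : E.toNat % 2 = 1 := by
      rcases Nat.even_or_odd E.toNat with hev | hod
      · exfalso
        apply hnotdvd
        obtain ⟨c, hc⟩ := hev
        refine ⟨c, ?_⟩
        rw [← hcast]
        push_cast [hc]
        ring
      · exact Nat.odd_iff.mp hod
    have hY1 : 1 < E.toNat := by
      by_contra hle
      push_neg at hle
      have hmul : E.toNat * (p+1) ≤ 1 * (p+1) := Nat.mul_le_mul_right _ hle
      have h3n : p^3 ≤ p^n := Nat.pow_le_pow_right (by omega) hn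
      have hcube : p + 1 < p^3 := by
        calc p + 1 ≤ 2*p := by omega
        _ < 3 * (3 * p) := by omega
        _ ≤ p * (p * p) := Nat.mul_le_mul hp3 (Nat.mul_le_mul hp3 le_rfl)
        _ = p^3 := by ring
      omega
    exact ⟨E.toNat, ⟨p+1, hnat.symm⟩, hYodd, hY1⟩

private lemma key {p q m m' a b : ℕ} (hp : p.Prime) (hq : q.Prime) (hpo : Odd p) (hqo : Odd q)
    (hm : 3 ≤ m) (hm' : m' = m ∨ m' = m + 1)
    (hN : G p m * (p ^ m' + 1) = 2 ^ a * q ^ b) : False := by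
  have hp2 : p % 2 = 1 := Nat.odd_iff.mp hpo
  have hp3 : 3 ≤ p := by
    have h2 := hp.two_le
    have : p ≠ 2 := by rintro rfl; exact (by decide : ¬ Odd 2) hpo
    omega
  -- X side : (p : ZMod q)^m = 1 and a contradiction source if p ≡ -1
  have hXside : (p : ZMod q)^m = 1 ∧ ((p : ZMod q) = -1 → (2 : ZMod q) = 0) := by
    rcases Nat.even_or_odd m with hme | hmo
    · have h4 : m % 4 = 0 ∨ m % 4 = 2 := by
        obtain ⟨k, hk⟩ := hme; omega
      rcases h4 with h4 | h4
      · -- X = (p^2+1)/2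
        obtain ⟨j, hj⟩ := hpo
        have hsq : p^2 = 4*(j*j+j) + 1 := by subst hj; ring
        set X := 2*(j*j+j) + 1 with hXdef
        have hX2 : p^2 + 1 = X * 2 := by omega
        have hG4 : G p 4 = (1+p) * (p^2+1) := by
          simp only [G, Finset.sum_range_succ, Finset.sum_range_zero]
          ring
        have hXG : X ∣ G p m := by
          have h1 : X ∣ p^2 + 1 := ⟨2, hX2⟩
          have h2 : p^2+1 ∣ G p 4 := ⟨1+p, by rw [hG4]; ring⟩
          have h3 : G p 4 ∣ G p m := by
            have : m = 4 * (m/4) := by omega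
            rw [this]
            exact G_dvd p 4 (m/4)
          exact (h1.trans h2).trans h3
        have hXN : X ∣ 2^a * q^b := hN ▸ hXG.trans (dvd_mul_right _ _)
        have hj1 : 1 ≤ j := by omega
        have hqX : q ∣ X := q_dvd_X hq hXN (by omega) (by nlinarith)
        have hq2 : q ∣ p^2 + 1 := hqX.trans ⟨2, hX2⟩
        have hpi2 : (p : ZMod q)^2 = -1 := by
          have h0 : ((p^2 + 1 : ℕ) : ZMod q) = 0 := (ZMod.natCast_eq_zero_iff _ q).mpr hq2
          push_cast at h0
          linear_combination h0
        constructor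
        · have hmm : m = 4 * (m/4) := by omega
          calc (p : ZMod q)^m = ((p : ZMod q)^4)^(m/4) := by rw [← pow_mul, ← hmm]
          _ = 1 := by
              have h42 : ((p:ZMod q))^4 = ((p:ZMod q)^2)^2 := by ring
              rw [h42, hpi2, neg_one_sq, one_pow]
        · intro hpe
          rw [hpe] at hpi2
          linear_combination hpi2
      · -- X = G p (m/2), m/2 odd
        set t := m / 2 with ht
        have htodd : t % 2 = 1 := by omega
        have ht3 : 3 ≤ t := by omega
        have hXG : G p t ∣ G p m := by
          have : m = t * 2 := by omega
          rw [this]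
          exact G_dvd p t 2
        have hXN : G p t ∣ 2^a * q^b := hN ▸ hXG.trans (dvd_mul_right _ _)
        have hqX : q ∣ G p t := q_dvd_X hq hXN (by rw [G_mod_two p hp2]; omega)
          (G_gt_one hp.two_le (by omega))
        have hpt : (p : ZMod q)^t = 1 := q_dvd_G_pow hqX
        constructor
        · have hmm : m = t * 2 := by omega
          rw [hmm, pow_mul, hpt, one_pow]
        · intro hpe
          rw [hpe] at hpt
          rw [Odd.neg_pow (Nat.odd_iff.mpr htodd), one_pow] at hpt
          linear_combination -hpt
    · -- m odd : X = G p m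
      have hXN : G p m ∣ 2^a * q^b := hN ▸ dvd_mul_right _ _
      have hqX : q ∣ G p m := q_dvd_X hq hXN
        (by rw [G_mod_two p hp2]; exact Nat.odd_iff.mp hmo)
        (G_gt_one hp.two_le (by omega))
      have hpm : (p : ZMod q)^m = 1 := q_dvd_G_pow hqX
      refine ⟨hpm, fun hpe => ?_⟩
      rw [hpe, Odd.neg_pow hmo, one_pow] at hpm
      linear_combination -hpm
  -- Y side
  obtain ⟨Y, hYdvd, hYodd, hY1⟩ := exists_Y hp3 hp2 (by omega : 3 ≤ m')
  have hYN : Y ∣ 2^a * q^b := hN ▸ (hYdvd.trans (dvd_mul_left _ _))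
  have hqY : q ∣ p^m' + 1 := (q_dvd_X hq hYN hYodd hY1).trans hYdvd
  have hpm' : (p : ZMod q)^m' = -1 := by
    have h0 : ((p^m' + 1 : ℕ) : ZMod q) = 0 := (ZMod.natCast_eq_zero_iff _ q).mpr hqY
    push_cast at h0
    linear_combination h0
  rcases hm' with rfl | rfl
  · rw [hXside.1] at hpm'
    exact contra2 hq hqo (by linear_combination hpm')
  · rw [pow_succ, hXside.1, one_mul] at hpm'
    exact contra2 hq hqo (hXside.2 hpm')

theorem stmt12 (p q e a b : ℕ) (hp : p.Prime) (hq : q.Prime) (hpo : Odd p)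
    (hqo : Odd q) (he : 0 < e) (h : sbu (p ^ e) = 2 ^ a * q ^ b) : e ≤ 4 := by
  by_contra h5
  push_neg at h5
  rcases Nat.even_or_odd e with heven | hodd
  · obtain ⟨k, hk⟩ := heven
    have hk3 : 3 ≤ k := by omega
    have h1 := sbu_even hp he ⟨k, by omega⟩
    have he2 : e / 2 = k := by omega
    have hsplit : G p (e+1) = G p k * (p^(k+1) + 1) + p^k := by
      have h2 : e + 1 = k + (k+1) := by omega
      rw [h2, G_add, G_succ]
      ring
    have hN : G p k * (p^(k+1)+1) = 2^a * q^b := by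
      rw [he2] at h1
      omega
    exact (key hp hq hpo hqo hk3 (Or.inr rfl) hN).elim
  · obtain ⟨w, hw⟩ := hodd
    have hm3 : 3 ≤ w + 1 := by omega
    have h1 : sbu (p^e) = G p (e+1) := sbu_odd hp ⟨w, hw⟩
    have hsplit : G p (e+1) = G p (w+1) * (p^(w+1) + 1) := by
      have h2 : e + 1 = (w+1) + (w+1) := by omega
      rw [h2, G_add]
      ring
    exact (key hp hq hpo hqo hm3 (Or.inl rfl) (by rw [← hsplit, ← h1]; exact h)).elim
end

section
/- Let p be an odd prime such that σ**(p^3) = 2^a q^b for an odd prime q and nonnegative integers a, b. Then p + 1 = 2^(a-1) (so p is a Mersenne prime) and p² + 1 = 2 q^b. -/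
lemma unit_pp {p : ℕ} (hp : p.Prime) {c k : ℕ} (h : IsUnitaryDivisor c (p^k)) :
    c = 1 ∨ c = p ^ k := by
  obtain ⟨hdvd, hg⟩ := h
  obtain ⟨j, hj, rfl⟩ := (Nat.dvd_prime_pow hp).mp hdvd
  rcases Nat.eq_zero_or_pos j with rfl | hj0
  · left; simp
  rcases eq_or_lt_of_le hj with rfl | hlt
  · right; rfl
  exfalso
  rw [Nat.pow_div hj hp.pos] at hg
  have hpd : p ∣ Nat.gcd (p ^ j) (p ^ (k - j)) :=
    Nat.dvd_gcd (dvd_pow_self p hj0.ne') (dvd_pow_self p (by omega))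
  rw [hg] at hpd
  have := Nat.le_of_dvd one_pos hpd
  have := hp.two_le
  omega

lemma biu_pp {p : ℕ} (hp : p.Prime) {i : ℕ} (hi : i ≤ 3) :
    IsBiunitaryDivisor (p ^ i) (p ^ 3) := by
  refine ⟨pow_dvd_pow p hi, fun c h1 h2 => ?_⟩
  rw [show p ^ 3 / p ^ i = p ^ (3 - i) from Nat.pow_div hi hp.pos] at h2
  rcases unit_pp hp h1 with rfl | rfl
  · rfl
  rcases unit_pp hp h2 with h | h
  · exact h
  · have := Nat.pow_right_injective hp.two_le h
    omega

lemma sbu_p3 {p : ℕ} (hp : p.Prime) : sbu (p ^ 3) = (p + 1) * (p ^ 2 + 1) := by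
  classical
  rw [sbu]
  have hfilter : (p ^ 3).divisors.filter (fun d => IsBiunitaryDivisor d (p ^ 3))
      = (p ^ 3).divisors := by
    apply Finset.filter_true_of_mem
    intro d hd
    have hdvd : d ∣ p ^ 3 := (Nat.mem_divisors.mp hd).1
    obtain ⟨i, hi, rfl⟩ := (Nat.dvd_prime_pow hp).mp hdvd
    exact biu_pp hp hi
  rw [hfilter, Nat.divisors_prime_pow hp, Finset.sum_map]
  simp [Finset.sum_range_succ]
  ring

theorem stmt13 (p q a b : ℕ) (hp : p.Prime) (hpo : Odd p) (hq : q.Prime)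
    (hqo : Odd q) (h : sbu (p ^ 3) = 2 ^ a * q ^ b) :
    p + 1 = 2 ^ (a - 1) ∧ p ^ 2 + 1 = 2 * q ^ b := by
  rw [sbu_p3 hp] at h
  have hp3 : 3 ≤ p := by
    rcases hpo with ⟨t, rfl⟩
    have := hp.two_le
    omega
  -- 4 ∤ p^2 + 1, 2 ∣ p^2 + 1
  obtain ⟨t, rfl⟩ := hpo
  have hq3 : 3 ≤ q := by
    rcases hqo with ⟨s, rfl⟩
    have := hq.two_le
    omega
  -- q does not divide p + 1
  have hqnd : ¬ q ∣ (2 * t + 1 + 1) := by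
    intro hd
    -- then q ∤ p^2+1
    have hkey : ((2*t+1) + 1) * (2*t) + 2 = (2*t+1)^2 + 1 := by ring
    have hqnd2 : ¬ q ∣ ((2*t+1)^2 + 1) := by
      intro hd2
      rw [← hkey] at hd2
      have h2 : q ∣ 2 := (Nat.dvd_add_right (Dvd.dvd.mul_right hd _)).mp hd2
      have := Nat.le_of_dvd two_pos h2
      omega
    -- q^b coprime to p^2+1, q^b ∣ product so q^b ∣ p+1; also p^2+1 ∣ 2^a
    have hcop : Nat.Coprime (q ^ b) ((2*t+1)^2 + 1) :=
      Nat.Coprime.pow_left _ ((Nat.Prime.coprime_iff_not_dvd hq).mpr hqnd2)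
    have hdvdprod : ((2*t+1)^2 + 1) ∣ 2 ^ a * q ^ b := ⟨(2*t+1)+1, by linarith [h]⟩
    have hdvd2a : ((2*t+1)^2 + 1) ∣ 2 ^ a :=
      (Nat.Coprime.dvd_of_dvd_mul_right (Nat.Coprime.symm hcop)) hdvdprod
    obtain ⟨m, hm, hme⟩ := (Nat.dvd_prime_pow Nat.prime_two).mp hdvd2a
    -- p^2+1 ≡ 2 mod 4, so m ≤ 1, but p^2+1 ≥ 10
    have h4 : (2*t+1)^2 + 1 = 4*(t^2+t) + 2 := by ring
    rcases m with _ | _ | m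
    · simp at hme
    · simp at hme; omega
    · have : 4 ∣ 2 ^ (m + 2) := ⟨2 ^ m, by ring⟩
      omega
  -- so p+1 ∣ 2^a
  have hcop2 : Nat.Coprime (2*t+1+1) (q ^ b) :=
    Nat.Coprime.pow_right _ (Nat.Coprime.symm ((Nat.Prime.coprime_iff_not_dvd hq).mpr hqnd))
  have hdvdprod : (2*t+1+1) ∣ 2 ^ a * q ^ b := ⟨(2*t+1)^2+1, h.symm⟩
  have hdvd2a : (2*t+1+1) ∣ 2 ^ a := Nat.Coprime.dvd_of_dvd_mul_right hcop2 hdvdprod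
  obtain ⟨k, hk, hke⟩ := (Nat.dvd_prime_pow Nat.prime_two).mp hdvd2a
  -- cancel: p^2+1 = 2^(a-k) * q^b
  have hkpos : 1 ≤ k := by
    rcases k with _ | k
    · simp at hke
    · omega
  have hcanc : (2*t+1)^2 + 1 = 2 ^ (a - k) * q ^ b := by
    have h2k : (0:ℕ) < 2 ^ k := Nat.pow_pos (by norm_num)
    have h2a : (2:ℕ) ^ a = 2 ^ k * 2 ^ (a - k) := by
      rw [← pow_add]; congr 1; omega
    have heq : 2 ^ k * ((2*t+1)^2 + 1) = 2 ^ k * (2 ^ (a - k) * q ^ b) := by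
      calc 2 ^ k * ((2*t+1)^2 + 1) = 2 ^ a * q ^ b := by rw [← hke]; exact h
      _ = 2 ^ k * (2 ^ (a - k) * q ^ b) := by rw [h2a]; ring
    exact Nat.eq_of_mul_eq_mul_left h2k heq
  -- a - k = 1
  have h4 : (2*t+1)^2 + 1 = 4*(t^2+t) + 2 := by ring
  have hqbodd : Odd (q ^ b) := hqo.pow
  obtain ⟨s, hs⟩ := hqbodd
  have hak : a - k = 1 := by
    rcases Nat.lt_or_ge (a - k) 1 with hlt | hge
    · exfalso
      have h0 : a - k = 0 := by omega
      rw [h0, pow_zero, one_mul] at hcanc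
      omega
    rcases Nat.lt_or_ge (a - k) 2 with hlt2 | hge2
    · omega
    · exfalso
      have hd4 : (4:ℕ) ∣ 2 ^ (a - k) := by
        calc (4:ℕ) = 2 ^ 2 := by norm_num
        _ ∣ 2 ^ (a - k) := pow_dvd_pow 2 hge2
      have h4d : (4:ℕ) ∣ (2*t+1)^2 + 1 := by rw [hcanc]; exact hd4.mul_right _
      obtain ⟨c, hc⟩ := h4d
      omega
  have hka : k = a - 1 := by omega
  constructor
  · rw [← hka]; exact hke
  · rw [hcanc, hak]; ring
end

section
/- Let p be an odd prime such that σ**(p^4) = 2^a q^b for an odd prime q and nonnegative integers a, b. Then p + 1 is a power of 2 (so p is a Mersenne prime) and p² - p + 1 = q^b. -/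
lemma unit_char (p : ℕ) (hp : p.Prime) (i c : ℕ) (h : IsUnitaryDivisor c (p^i)) :
    c = 1 ∨ c = p ^ i := by
  obtain ⟨hd, hg⟩ := h
  obtain ⟨j, hj, rfl⟩ := (Nat.dvd_prime_pow hp).mp hd
  rcases eq_or_lt_of_le hj with rfl | hlt
  · right; rfl
  · left
    rcases Nat.eq_zero_or_pos j with rfl | hj0
    · simp
    exfalso
    have hdiv : p ∣ Nat.gcd (p ^ j) (p ^ i / p ^ j) := by
      apply Nat.dvd_gcd (dvd_pow_self p hj0.ne')
      rw [Nat.pow_div hj hp.pos]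
      exact dvd_pow_self p (Nat.sub_ne_zero_of_lt hlt)
    rw [hg] at hdiv
    exact hp.one_lt.ne' (Nat.dvd_one.mp hdiv)

lemma biu (p : ℕ) (hp : p.Prime) (j : ℕ) (hj : j ≤ 4) (hne : j ≠ 2) :
    IsBiunitaryDivisor (p^j) (p^4) := by
  refine ⟨pow_dvd_pow p hj, fun c hc1 hc2 => ?_⟩
  rw [Nat.pow_div hj hp.pos] at hc2
  rcases unit_char p hp j c hc1 with rfl | rfl
  · rfl
  rcases unit_char p hp (4-j) _ hc2 with h1 | h1
  · exact h1
  · have := Nat.pow_right_injective hp.two_le h1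
    omega

lemma sbu_p4 (p : ℕ) (hp : p.Prime) : sbu (p^4) = 1 + p + p^3 + p^4 := by
  classical
  have b0 := biu p hp 0 (by norm_num) (by norm_num)
  have b1 := biu p hp 1 (by norm_num) (by norm_num)
  have b3 := biu p hp 3 (by norm_num) (by norm_num)
  have b4 := biu p hp 4 (by norm_num) (by norm_num)
  rw [pow_zero] at b0; rw [pow_one] at b1
  have hset : (p^4).divisors.filter (fun d => IsBiunitaryDivisor d (p^4)) =
      {1, p, p^3, p^4} := by
    ext d
    simp only [Finset.mem_filter, Nat.mem_divisors, Finset.mem_insert, Finset.mem_singleton]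
    constructor
    · rintro ⟨⟨hd, -⟩, hb⟩
      obtain ⟨j, hj, rfl⟩ := (Nat.dvd_prime_pow hp).mp hd
      interval_cases j
      · left; rfl
      · right; left; exact pow_one p
      · exfalso
        have h2 : p^4 / p^2 = p^2 := by rw [Nat.pow_div (by norm_num) hp.pos]
        have hu : IsUnitaryDivisor (p^2) (p^2) :=
          ⟨dvd_rfl, by rw [Nat.div_self (pow_pos hp.pos 2)]; exact Nat.gcd_one_right _⟩
        have := hb.2 (p^2) hu (by rw [h2]; exact hu)
        exact (Nat.one_lt_pow (by norm_num) hp.one_lt).ne' this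
      · right; right; left; rfl
      · right; right; right; rfl
    · have hne : p^4 ≠ 0 := pow_ne_zero _ hp.pos.ne'
      rintro (rfl | rfl | rfl | rfl)
      · exact ⟨⟨one_dvd _, hne⟩, b0⟩
      · exact ⟨⟨b1.1, hne⟩, b1⟩
      · exact ⟨⟨b3.1, hne⟩, b3⟩
      · exact ⟨⟨dvd_rfl, hne⟩, b4⟩
  rw [sbu, hset]
  have hlt1 : (1:ℕ) < p := hp.one_lt
  have hlt2 : p < p^3 := by
    calc p = p^1 := (pow_one p).symm
    _ < p^3 := Nat.pow_lt_pow_right hp.one_lt (by norm_num)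
  have hlt3 : p^3 < p^4 := Nat.pow_lt_pow_right hp.one_lt (by norm_num)
  rw [Finset.sum_insert (by simp; omega), Finset.sum_insert (by simp; omega),
    Finset.sum_insert (by simp; omega), Finset.sum_singleton]
  ring
theorem stmt14 (p q a b : ℕ) (hp : p.Prime) (hpo : Odd p) (hq : q.Prime)
    (hqo : Odd q) (h : sbu (p ^ 4) = 2 ^ a * q ^ b) :
    (∃ k : ℕ, p + 1 = 2 ^ k) ∧ p ^ 2 - p + 1 = q ^ b := by
  have hp2 : p ≠ 2 := by rintro rfl; exact (Nat.not_odd_iff_even.mpr even_two) hpo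
  have hp3 : 3 ≤ p := by have := hp.two_le; omega
  have hpp : p ≤ p ^ 2 := Nat.le_self_pow two_ne_zero p
  set M := p ^ 2 - p + 1 with hM
  have hMkey : (p + 1) * M = p ^ 3 + 1 := by rw [hM]; zify [hpp]; ring
  have hfact : (p + 1) ^ 2 * M = 1 + p + p ^ 3 + p ^ 4 := by
    calc (p + 1) ^ 2 * M = (p + 1) * ((p + 1) * M) := by ring
    _ = (p + 1) * (p ^ 3 + 1) := by rw [hMkey]
    _ = 1 + p + p ^ 3 + p ^ 4 := by ring
  rw [sbu_p4 p hp, ← hfact] at h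
  -- M is odd and > 1
  have hMe : M = p * (p - 1) + 1 := by rw [hM]; zify [hpp, hp.pos]; ring
  have hModd : Odd M := by
    rw [hMe]
    exact (((Nat.Odd.sub_odd hpo odd_one).mul_left p)).add_one
  have hM1 : 1 < M := by nlinarith [hMe]
  -- M divides q^b
  have hMdvd : M ∣ 2 ^ a * q ^ b := h ▸ dvd_mul_left M ((p + 1) ^ 2)
  have hcop2M : Nat.Coprime (2 ^ a) M :=
    Nat.Coprime.pow_left a (Nat.coprime_two_left.mpr hModd)
  have hMq : M ∣ q ^ b := (Nat.Coprime.dvd_of_dvd_mul_left hcop2M.symm hMdvd)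
  obtain ⟨u, hub, hMu⟩ := (Nat.dvd_prime_pow hq).mp hMq
  have hu1 : 1 ≤ u := by
    rcases Nat.eq_zero_or_pos u with rfl | h; · simp [pow_zero] at hMu; omega
    · exact h
  have hqM : q ∣ M := hMu ▸ dvd_pow_self q (by omega)
  -- q does not divide p+1
  have hqnd : ¬ q ∣ (p + 1) := by
    intro hdq
    have h3 : M = (p - 2) * (p + 1) + 3 := by rw [hM]; zify [hpp, show 2 ≤ p from by omega]; ring
    have hq3 : q ∣ 3 := by
      have hprod : q ∣ (p - 2) * (p + 1) := hdq.mul_left _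
      exact (Nat.dvd_add_right hprod).mp (h3 ▸ hqM)
    have hq3' : q = 3 := (Nat.prime_dvd_prime_iff_eq hq (by norm_num)).mp hq3
    subst hq3'
    obtain ⟨c, hc⟩ := hdq
    have hc1 : 1 ≤ c := by omega
    have hpm : p = 3 * (c - 1) + 2 := by omega
    set m := c - 1 with hm
    have hpsq : p ^ 2 = 9 * m ^ 2 + 12 * m + 4 := by rw [hpm]; ring
    have hM9 : M = 9 * m ^ 2 + 9 * m + 3 := by omega
    rcases Nat.lt_or_ge u 2 with hu2 | hu2
    · have : u = 1 := by omega
      subst this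
      rw [pow_one] at hMu
      omega
    · have h9 : (9 : ℕ) ∣ M := by
        rw [hMu]
        have : (3:ℕ) ^ 2 ∣ 3 ^ u := pow_dvd_pow 3 hu2
        simpa using this
      omega
  -- p+1 is a power of 2
  have hpd : (p + 1) ∣ 2 ^ a * q ^ b := by
    have : (p + 1) ∣ (p + 1) ^ 2 * M := ⟨(p + 1) * M, by ring⟩
    exact h ▸ this
  have hcpq : Nat.Coprime (p + 1) (q ^ b) :=
    Nat.Coprime.pow_right b ((hq.coprime_iff_not_dvd.mpr hqnd).symm)
  have hp2a : (p + 1) ∣ 2 ^ a := Nat.Coprime.dvd_of_dvd_mul_right hcpq hpd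
  obtain ⟨k, hk, hpk⟩ := (Nat.dvd_prime_pow Nat.prime_two).mp hp2a
  refine ⟨⟨k, hpk⟩, ?_⟩
  -- now show u = b
  have hq2 : Nat.Coprime 2 q := Nat.coprime_two_left.mpr hqo
  have heq : 2 ^ (2 * k) * q ^ u = 2 ^ a * q ^ b := by
    rw [← h, hpk, hMu]; ring
  have hble : b ≤ u := by
    have hd : q ^ b ∣ 2 ^ (2 * k) * q ^ u := heq ▸ dvd_mul_left _ _
    have : q ^ b ∣ q ^ u :=
      Nat.Coprime.dvd_of_dvd_mul_left (Nat.Coprime.pow _ _ hq2.symm) hd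
    exact (Nat.pow_dvd_pow_iff_le_right hq.one_lt).mp this
  have hule : u ≤ b := by
    have hd : q ^ u ∣ 2 ^ a * q ^ b := heq ▸ (dvd_mul_left _ _)
    have : q ^ u ∣ q ^ b :=
      Nat.Coprime.dvd_of_dvd_mul_left (Nat.Coprime.pow _ _ hq2.symm) hd
    exact (Nat.pow_dvd_pow_iff_le_right hq.one_lt).mp this
  have : u = b := le_antisymm hule hble
  rw [hMu, this]
end

section
/- If N = 2^(2s-1) with s > 1, then σ**(σ**(N)) > 2N. Consequently no power of 2 with odd exponent greater than 1 is biunitary superperfect. -/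
lemma unit_pow2 {c j : ℕ} (h : IsUnitaryDivisor c (2 ^ j)) : c = 1 ∨ c = 2 ^ j := by
  obtain ⟨hd, hg⟩ := h
  obtain ⟨i, hi, rfl⟩ := (Nat.dvd_prime_pow Nat.prime_two).mp hd
  rcases Nat.eq_zero_or_pos i with rfl | hi0
  · left; simp
  rcases eq_or_lt_of_le hi with rfl | hlt
  · right; rfl
  exfalso
  have hdiv : 2 ^ j / 2 ^ i = 2 ^ (j - i) := Nat.pow_div hi (by norm_num)
  have h1 : 2 ∣ 2 ^ i := dvd_pow_self 2 hi0.ne'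
  have h2 : 2 ∣ 2 ^ (j - i) := dvd_pow_self 2 (by omega)
  have : (2 : ℕ) ∣ 1 := hg ▸ (hdiv ▸ Nat.dvd_gcd h1 h2)
  norm_num at this

lemma sum_range_two_pow (n : ℕ) : ∑ i ∈ Finset.range n, 2 ^ i = 2 ^ n - 1 := by
  rw [Nat.geomSum_eq le_rfl]; simp

lemma sbu_two_pow_odd {k : ℕ} (hk : Odd k) : sbu (2 ^ k) = 2 ^ (k + 1) - 1 := by
  classical
  have hfilter : (2 ^ k).divisors.filter (fun d => IsBiunitaryDivisor d (2 ^ k)) =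
      (2 ^ k).divisors := by
    apply Finset.filter_true_of_mem
    intro d hd
    have hdvd : d ∣ 2 ^ k := (Nat.mem_divisors.mp hd).1
    refine ⟨hdvd, fun c hc1 hc2 => ?_⟩
    obtain ⟨j, hj, rfl⟩ := (Nat.dvd_prime_pow Nat.prime_two).mp hdvd
    have hdiv : 2 ^ k / 2 ^ j = 2 ^ (k - j) := Nat.pow_div hj (by norm_num)
    rw [hdiv] at hc2
    rcases unit_pow2 hc1 with rfl | rfl
    · rfl
    rcases unit_pow2 hc2 with h | h
    · exact h
    · have := Nat.pow_right_injective (le_refl 2) h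
      obtain ⟨m, hm⟩ := hk
      omega
  rw [sbu, hfilter, Nat.sum_divisors_prime_pow Nat.prime_two, sum_range_two_pow]

lemma biunit_one {n : ℕ} : IsBiunitaryDivisor 1 n :=
  ⟨one_dvd _, fun c hc _ => Nat.dvd_one.mp hc.1⟩

lemma biunit_self {n : ℕ} (hn : 0 < n) : IsBiunitaryDivisor n n :=
  ⟨dvd_rfl, fun c _ hc2 => by rw [Nat.div_self hn] at hc2; exact Nat.dvd_one.mp hc2.1⟩

lemma biunit_of_unit {d n : ℕ} (h : IsUnitaryDivisor d n) : IsBiunitaryDivisor d n := by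
  obtain ⟨hd, hg⟩ := h
  exact ⟨hd, fun c hc1 hc2 => Nat.dvd_one.mp (hg ▸ Nat.dvd_gcd hc1.1 hc2.1)⟩

theorem stmt16 (s : ℕ) (hs : 1 < s) :
    sbu (sbu (2 ^ (2 * s - 1))) > 2 * 2 ^ (2 * s - 1) := by
  classical
  have hodd : Odd (2 * s - 1) := ⟨s - 1, by omega⟩
  have hk1 : 2 * s - 1 + 1 = 2 * s := by omega
  have h1 : sbu (2 ^ (2 * s - 1)) = 2 ^ (2 * s) - 1 := by
    rw [sbu_two_pow_odd hodd, hk1]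
  set x : ℕ := 2 ^ s with hx
  have hx4 : 4 ≤ x := by
    calc (4 : ℕ) = 2 ^ 2 := by norm_num
    _ ≤ 2 ^ s := Nat.pow_le_pow_right (by norm_num) hs
  have hxx : 2 ^ (2 * s) = x * x := by rw [hx, ← pow_add]; ring_nf
  set m : ℕ := 2 ^ (2 * s) - 1 with hmdef
  have hm : m = x * x - 1 := by rw [hmdef, hxx]
  have hxxle : 16 ≤ x * x := Nat.mul_le_mul hx4 hx4
  have hx4x : 4 * x ≤ x * x := Nat.mul_le_mul_right x hx4
  have hab : (x - 1) * (x + 1) = m := by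
    have h2 : x * (x + 1) = x * x + x := by ring
    have h3 : (x - 1) * (x + 1) = x * (x + 1) - 1 * (x + 1) := Nat.sub_mul x 1 (x + 1)
    rw [one_mul] at h3
    omega
  have hmpos : 0 < m := by omega
  have hadvd : (x - 1) ∣ m := ⟨x + 1, hab.symm⟩
  have hdivq : m / (x - 1) = x + 1 := by
    rw [← hab]; exact Nat.mul_div_cancel_left _ (by omega)
  have haunit : IsUnitaryDivisor (x - 1) m := by
    refine ⟨hadvd, ?_⟩
    rw [hdivq]
    have hodd' : ¬ 2 ∣ (x - 1) := by
      have : 2 ∣ x := dvd_pow_self 2 (by omega)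
      omega
    have hg2 : Nat.gcd (x - 1) (x + 1) ∣ 2 := by
      have h1' : Nat.gcd (x - 1) (x + 1) ∣ x - 1 := Nat.gcd_dvd_left _ _
      have h2' : Nat.gcd (x - 1) (x + 1) ∣ x + 1 := Nat.gcd_dvd_right _ _
      have h3' : Nat.gcd (x - 1) (x + 1) ∣ (x + 1) - (x - 1) := Nat.dvd_sub h2' h1'
      have he : (x + 1) - (x - 1) = 2 := by omega
      rwa [he] at h3'
    rcases (Nat.dvd_prime Nat.prime_two).mp hg2 with h | h
    · exact h
    · exact absurd (h ▸ Nat.gcd_dvd_left (x - 1) (x + 1)) hodd'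
  have hsub : ({1, x - 1, m} : Finset ℕ) ⊆
      m.divisors.filter (fun d => IsBiunitaryDivisor d m) := by
    intro d hd
    simp only [Finset.mem_insert, Finset.mem_singleton] at hd
    simp only [Finset.mem_filter, Nat.mem_divisors]
    rcases hd with rfl | rfl | rfl
    · exact ⟨⟨one_dvd _, hmpos.ne'⟩, biunit_one⟩
    · exact ⟨⟨hadvd, hmpos.ne'⟩, biunit_of_unit haunit⟩
    · exact ⟨⟨dvd_rfl, hmpos.ne'⟩, biunit_self hmpos⟩
  have hsum : ∑ d ∈ ({1, x - 1, m} : Finset ℕ), d ≤ sbu m :=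
    Finset.sum_le_sum_of_subset hsub
  have hne1 : (1 : ℕ) ≠ x - 1 := by omega
  have hne2 : (1 : ℕ) ≠ m := by omega
  have hne3 : x - 1 ≠ m := by omega
  have hsumval : ∑ d ∈ ({1, x - 1, m} : Finset ℕ), d = 1 + (x - 1) + m := by
    rw [Finset.sum_insert (by simp [hne1, hne2]),
        Finset.sum_insert (by simp [hne3]), Finset.sum_singleton]
    ring
  rw [h1]
  have hpw : 2 * 2 ^ (2 * s - 1) = 2 ^ (2 * s) := by
    conv_rhs => rw [← hk1, pow_succ]
    ring
  rw [hsumval] at hsum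
  omega
end
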